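/- arXiv:0808.3206 — 4 statements merged into one kernel-verified Lean document; each statement's English description precedes it below -/
import Mathlib

section
/- Let P be a simple closed curve in ℝ² with interior point x, and let C be a simple curve from x to a point a in the exterior of P. Then C crosses P an odd number of times, i.e., if C meets P transversally in finitely many points, the number of intersection points is odd. -/
/-- A simple closed curve in the plane: the image of a continuous injection of the circle. -/
def IsSimpleClosedCurve (P : Set (ℝ × ℝ)) : Prop :=
  ∃ f : AddCircle (1 : ℝ) → ℝ × ℝ, Continuous f ∧ Function.Injective f ∧ Set.range f = P

/-- The interior of a simple closed curve: points of the complement whose connected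
component in the complement is bounded. -/
def JordanInterior (P : Set (ℝ × ℝ)) : Set (ℝ × ℝ) :=
  {y | y ∉ P ∧ Bornology.IsBounded (connectedComponentIn Pᶜ y)}

/-- The exterior of a simple closed curve: points of the complement whose connected
component in the complement is unbounded. -/
def JordanExterior (P : Set (ℝ × ℝ)) : Set (ℝ × ℝ) :=
  {y | y ∉ P ∧ ¬ Bornology.IsBounded (connectedComponentIn Pᶜ y)}

/-- A curve `f` crosses `P` transversally at time `t`: it meets `P` at `t` and, on a
small punctured neighbourhood of `t`, passes from one side of `P` (interior or
exterior) to the other. -/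
def CrossesTransversallyAt (P : Set (ℝ × ℝ)) (f : ℝ → ℝ × ℝ) (t : ℝ) : Prop :=
  f t ∈ P ∧ ∃ ε > (0 : ℝ),
    ((∀ s ∈ Set.Ioo (t - ε) t, f s ∈ JordanInterior P) ∧
      (∀ s ∈ Set.Ioo t (t + ε), f s ∈ JordanExterior P)) ∨
    ((∀ s ∈ Set.Ioo (t - ε) t, f s ∈ JordanExterior P) ∧
      (∀ s ∈ Set.Ioo t (t + ε), f s ∈ JordanInterior P))

lemma component_eq_of_no_cross (P : Set (ℝ × ℝ)) (f : ℝ → ℝ × ℝ) {a b : ℝ}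
    (hf : ContinuousOn f (Set.Icc a b)) (hP : ∀ s ∈ Set.Icc a b, f s ∉ P)
    {s s' : ℝ} (hs : s ∈ Set.Icc a b) (hs' : s' ∈ Set.Icc a b) :
    connectedComponentIn Pᶜ (f s) = connectedComponentIn Pᶜ (f s') := by
  have hconn : IsPreconnected (f '' Set.Icc a b) := (isPreconnected_Icc).image f hf
  have hsub : f '' Set.Icc a b ⊆ Pᶜ := by
    rintro _ ⟨x, hx, rfl⟩; exact hP x hx
  have h := hconn.subset_connectedComponentIn (Set.mem_image_of_mem f hs) hsub
  exact (connectedComponentIn_eq (h (Set.mem_image_of_mem f hs')))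

lemma parity_lemma (P : Set (ℝ × ℝ)) (f : ℝ → ℝ × ℝ) :
    ∀ (n : ℕ) (F : Finset ℝ) (a : ℝ), F.card = n → a ≤ 1 →
      ContinuousOn f (Set.Icc a 1) →
      (∀ t, t ∈ F ↔ t ∈ Set.Icc a 1 ∧ f t ∈ P) →
      (∀ t ∈ F, CrossesTransversallyAt P f t) →
      f a ∉ P → f 1 ∈ JordanExterior P →
      (f a ∈ JordanInterior P ↔ Odd F.card) := by
  intro n
  induction n with
  | zero =>
    intro F a hcard ha1 hf hF htrans haP h1
    have hFe : F = ∅ := Finset.card_eq_zero.mp hcard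
    have hnc : ∀ s ∈ Set.Icc a 1, f s ∉ P := by
      intro s hs hsP
      have : s ∈ F := (hF s).mpr ⟨hs, hsP⟩
      simp [hFe] at this
    have heq := component_eq_of_no_cross P f hf hnc
      (Set.left_mem_Icc.mpr ha1) (Set.right_mem_Icc.mpr ha1)
    rw [hcard]
    simp only [Nat.odd_iff, Nat.zero_mod]
    constructor
    · intro hint
      exact absurd (heq ▸ hint.2) h1.2
    · simp
  | succ n ih =>
    intro F a hcard ha1 hf hF htrans haP h1
    have hne : F.Nonempty := Finset.card_pos.mp (by omega)
    set t := F.min' hne with htdef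
    have ht : t ∈ F := F.min'_mem hne
    obtain ⟨⟨hat, ht1⟩, htP⟩ := (hF t).mp ht
    have hat' : a < t := lt_of_le_of_ne hat (by rintro rfl; exact haP htP)
    have ht1' : t < 1 := lt_of_le_of_ne ht1 (fun h => h1.1 (h ▸ htP))
    obtain ⟨_, ε, hε, hcase⟩ := htrans t ht
    -- upper bound u for the other crossings
    obtain ⟨u, htu, hu1, humin⟩ :
        ∃ u, t < u ∧ u ≤ 1 ∧ ∀ t' ∈ F.erase t, u ≤ t' := by
      by_cases hne' : (F.erase t).Nonempty
      · refine ⟨(F.erase t).min' hne', ?_, ?_, fun t' ht' => Finset.min'_le _ _ ht'⟩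
        · have hm := (F.erase t).min'_mem hne'
          have h1 := (Finset.mem_erase.mp hm).1
          have h2 := F.min'_le _ (Finset.mem_erase.mp hm).2
          exact lt_of_le_of_ne h2 (Ne.symm h1)
        · exact ((hF _).mp (Finset.mem_erase.mp ((F.erase t).min'_mem hne')).2).1.2
      · exact ⟨1, ht1', le_refl _, fun t' ht' => absurd ⟨t', ht'⟩ hne'⟩
    -- pick points just left and right of t
    set m := max a (t - ε) with hmdef
    have hmt : m < t := max_lt hat' (by linarith)
    set sl := (m + t) / 2 with hsldef
    have hsl1 : m < sl := by rw [hsldef]; linarith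
    have hsl2 : sl < t := by rw [hsldef]; linarith
    have hsla : a < sl := lt_of_le_of_lt (le_max_left _ _) hsl1
    have hslε : t - ε < sl := lt_of_le_of_lt (le_max_right _ _) hsl1
    set m' := min u (t + ε) with hm'def
    have htm' : t < m' := lt_min htu (by linarith)
    set sr := (t + m') / 2 with hsrdef
    have hsr1 : t < sr := by rw [hsrdef]; linarith
    have hsr2 : sr < m' := by rw [hsrdef]; linarith
    have hsru : sr < u := lt_of_lt_of_le hsr2 (min_le_left _ _)
    have hsrε : sr < t + ε := lt_of_lt_of_le hsr2 (min_le_right _ _)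
    have hsr1' : sr ≤ 1 := le_of_lt (lt_of_lt_of_le hsru hu1)
    have hasr : a < sr := lt_trans hat' hsr1
    -- side of f a equals side of f sl
    have hnc : ∀ s ∈ Set.Icc a sl, f s ∉ P := by
      intro s hs hsP
      have hsF : s ∈ F := (hF s).mpr ⟨⟨hs.1, le_trans hs.2 (le_of_lt (lt_trans hsl2 ht1'))⟩, hsP⟩
      have := F.min'_le s hsF
      have := hs.2
      linarith
    have heq := component_eq_of_no_cross P f
      (hf.mono (Set.Icc_subset_Icc le_rfl (le_of_lt (lt_trans hsl2 ht1'))))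
      hnc (Set.left_mem_Icc.mpr (le_of_lt hsla)) (Set.right_mem_Icc.mpr (le_of_lt hsla))
    -- induction hypothesis applied from sr
    have hF' : ∀ t', t' ∈ F.erase t ↔ t' ∈ Set.Icc sr 1 ∧ f t' ∈ P := by
      intro t'
      constructor
      · intro h
        obtain ⟨hFmem⟩ := Finset.mem_erase.mp h
        have h2 := (Finset.mem_erase.mp h).2
        refine ⟨⟨le_of_lt (lt_of_lt_of_le hsru (humin t' h)), ((hF t').mp h2).1.2⟩, ((hF t').mp h2).2⟩
      · rintro ⟨⟨hs, hs1⟩, hp⟩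
        refine Finset.mem_erase.mpr ⟨?_, (hF t').mpr ⟨⟨le_trans (le_of_lt hasr) hs, hs1⟩, hp⟩⟩
        intro h; rw [h] at hs; linarith
    have hsrIoo : sr ∈ Set.Ioo t (t + ε) := ⟨hsr1, hsrε⟩
    have hslIoo : sl ∈ Set.Ioo (t - ε) t := ⟨hslε, hsl2⟩
    have hsrP : f sr ∉ P := by
      rcases hcase with ⟨_, hR⟩ | ⟨_, hR⟩
      · exact (hR sr hsrIoo).1
      · exact (hR sr hsrIoo).1
    have hih := ih (F.erase t) sr (by rw [Finset.card_erase_of_mem ht, hcard]; omega) hsr1'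
      (hf.mono (Set.Icc_subset_Icc (le_of_lt hasr) le_rfl)) hF'
      (fun t' ht' => htrans t' (Finset.mem_erase.mp ht').2) hsrP h1
    rw [Finset.card_erase_of_mem ht, hcard] at hih
    simp only [Nat.add_sub_cancel] at hih
    rw [hcard]
    rcases hcase with ⟨hL, hR⟩ | ⟨hL, hR⟩
    · -- left interior, right exterior
      have hli := hL sl hslIoo
      have hre := hR sr hsrIoo
      have : ¬ Odd n := fun ho => hre.2 (hih.mpr ho).2
      refine iff_of_true ⟨haP, heq ▸ hli.2⟩ ?_
      rw [Nat.odd_add_one]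
      exact this
    · -- left exterior, right interior
      have hle := hL sl hslIoo
      have hri := hR sr hsrIoo
      have hodd : Odd n := hih.mp hri
      refine iff_of_false (fun hint => hle.2 (heq ▸ hint.2)) ?_
      rw [Nat.odd_add_one]
      exact fun h => h hodd

/-- A simple curve from a point in the interior of a simple closed curve `P` to a
point in the exterior, meeting `P` transversally in finitely many points, crosses `P`
an odd number of times. -/
theorem odd_crossings_interior_to_exterior (P : Set (ℝ × ℝ))
    (hP : IsSimpleClosedCurve P) (f : ℝ → ℝ × ℝ)
    (hf : ContinuousOn f (Set.Icc 0 1)) (hinj : Set.InjOn f (Set.Icc 0 1))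
    (h0 : f 0 ∈ JordanInterior P) (h1 : f 1 ∈ JordanExterior P)
    (F : Finset ℝ) (hF : ∀ t, t ∈ F ↔ t ∈ Set.Icc (0 : ℝ) 1 ∧ f t ∈ P)
    (htrans : ∀ t ∈ F, CrossesTransversallyAt P f t) :
    Odd F.card := by
  have h0P : f 0 ∉ P := h0.1
  exact (parity_lemma P f F.card F 0 rfl (by norm_num) hf hF htrans h0P h1).mp h0
end

section
/- With P, S, T₁, T₂ as above, any point y in the interior of P not on S lies in exactly one of T₁, T₂, and any curve in the interior of P from a point of T₁ to a point of T₂ must intersect S. -/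
/-- A simple arc in the plane from `a` to `b` with image `γ`. -/
def IsArc (γ : Set (ℝ × ℝ)) (a b : ℝ × ℝ) : Prop :=
  ∃ f : ℝ → ℝ × ℝ, ContinuousOn f (Set.Icc 0 1) ∧ Set.InjOn f (Set.Icc 0 1) ∧
    f 0 = a ∧ f 1 = b ∧ γ = f '' Set.Icc 0 1

theorem subset_of_isPreconnected_of_components_eq_or_eq {X : Type*} [TopologicalSpace X]
    {U T₁ T₂ C : Set X} {x : X} (hdisj : Disjoint T₁ T₂)
    (hcomp : ∀ y ∈ U, connectedComponentIn U y = T₁ ∨ connectedComponentIn U y = T₂)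
    (hC : IsPreconnected C) (hCU : C ⊆ U) (hxC : x ∈ C) (hx₁ : x ∈ T₁) : C ⊆ T₁ := by
  have hxU : x ∈ U := hCU hxC
  have hcomp_x : connectedComponentIn U x = T₁ := by
    refine (hcomp x hxU).resolve_right fun h₂ => hdisj.notMem_of_mem_left hx₁ ?_
    exact h₂ ▸ mem_connectedComponentIn hxU
  exact hcomp_x ▸ hC.subset_connectedComponentIn hxC hCU

theorem jordan_arc_separation_crossing_general (P S : Set (ℝ × ℝ))
    (T₁ T₂ : Set (ℝ × ℝ))
    (hdisj : Disjoint T₁ T₂) (hunion : JordanInterior P \ S = T₁ ∪ T₂)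
    (hcomp : ∀ y ∈ JordanInterior P \ S,
      connectedComponentIn (JordanInterior P \ S) y = T₁ ∨
      connectedComponentIn (JordanInterior P \ S) y = T₂) :
    (∀ y ∈ JordanInterior P \ S, (y ∈ T₁ ↔ y ∉ T₂)) ∧
    (∀ γ : ℝ → ℝ × ℝ, ContinuousOn γ (Set.Icc 0 1) →
      (∀ t ∈ Set.Icc (0 : ℝ) 1, γ t ∈ JordanInterior P) →
      γ 0 ∈ T₁ → γ 1 ∈ T₂ → ∃ t ∈ Set.Icc (0 : ℝ) 1, γ t ∈ S) := by
  refine ⟨fun y hy => ⟨fun hy₁ => hdisj.notMem_of_mem_left hy₁, fun hy₂ => ?_⟩, ?_⟩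
  · exact (hunion ▸ hy : y ∈ T₁ ∪ T₂).resolve_right hy₂
  · intro γ hγ hγP h₀ h₁
    by_contra! hγS
    have hmaps : γ '' Set.Icc 0 1 ⊆ JordanInterior P \ S := by
      rintro _ ⟨t, ht, rfl⟩
      exact ⟨hγP t ht, hγS t ht⟩
    have himage : γ '' Set.Icc 0 1 ⊆ T₁ :=
      subset_of_isPreconnected_of_components_eq_or_eq hdisj hcomp
        (isPreconnected_Icc.image γ hγ) hmaps ⟨0, by norm_num, rfl⟩ h₀
    exact hdisj.notMem_of_mem_left (himage ⟨1, by norm_num, rfl⟩) h₁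

/-- With `P` a simple closed curve, `S` a simple arc with endpoints on `P` and interior
in `int P`, and `T₁, T₂` the two components of `int P \ S`: every point of
`int P \ S` lies in exactly one of `T₁, T₂`, and every curve inside `int P` joining a
point of `T₁` to a point of `T₂` must meet `S`. -/
theorem jordan_arc_separation_crossing (P S : Set (ℝ × ℝ)) (p q : ℝ × ℝ)
    (hP : IsSimpleClosedCurve P) (hS : IsArc S p q) (hpq : p ≠ q)
    (hpP : p ∈ P) (hqP : q ∈ P) (hSP : S ∩ P = {p, q})
    (hSint : S \ {p, q} ⊆ JordanInterior P)
    (T₁ T₂ : Set (ℝ × ℝ)) (hT : T₁ ≠ T₂) (hT₁ : IsConnected T₁) (hT₂ : IsConnected T₂)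
    (hdisj : Disjoint T₁ T₂) (hunion : JordanInterior P \ S = T₁ ∪ T₂)
    (hcomp : ∀ y ∈ JordanInterior P \ S,
      connectedComponentIn (JordanInterior P \ S) y = T₁ ∨
      connectedComponentIn (JordanInterior P \ S) y = T₂) :
    (∀ y ∈ JordanInterior P \ S, (y ∈ T₁ ↔ y ∉ T₂)) ∧
    (∀ γ : ℝ → ℝ × ℝ, ContinuousOn γ (Set.Icc 0 1) →
      (∀ t ∈ Set.Icc (0 : ℝ) 1, γ t ∈ JordanInterior P) →
      γ 0 ∈ T₁ → γ 1 ∈ T₂ → ∃ t ∈ Set.Icc (0 : ℝ) 1, γ t ∈ S) :=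
  jordan_arc_separation_crossing_general P S T₁ T₂ hdisj hunion hcomp
end

section
/- Let P be a simple closed curve, S a simple arc with endpoints on P and interior in int P, and let T₁, T₂ be the two components of int P \ S, with boundary arcs A₁, A₂ of P. If x ∈ T₁ and γ is a simple curve from x to a point of A₂ lying in int P except for its endpoint, then γ meets S. -/
/-- With `P` a simple closed curve, `S` a simple arc splitting `int P` into components
`T₁` (bounded by `A₁ ∪ S`) and `T₂` (bounded by `A₂ ∪ S`): a simple curve starting at
`x ∈ T₁`, lying in `int P` except for its final endpoint which lies on the arc `A₂`,
must meet `S`. -/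
theorem curve_from_T1_to_A2_meets_S (P S : Set (ℝ × ℝ)) (p q : ℝ × ℝ)
    (hP : IsSimpleClosedCurve P) (hS : IsArc S p q) (hpq : p ≠ q)
    (hpP : p ∈ P) (hqP : q ∈ P) (hSP : S ∩ P = {p, q})
    (hSint : S \ {p, q} ⊆ JordanInterior P)
    (A₁ A₂ T₁ T₂ : Set (ℝ × ℝ))
    (hA : A₁ ≠ A₂) (hA₁ : IsConnected A₁) (hA₂ : IsConnected A₂)
    (hAdisj : Disjoint A₁ A₂) (hAunion : P \ {p, q} = A₁ ∪ A₂)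
    (hT : T₁ ≠ T₂) (hT₁ : IsConnected T₁) (hT₂ : IsConnected T₂)
    (hTdisj : Disjoint T₁ T₂) (hTunion : JordanInterior P \ S = T₁ ∪ T₂)
    (hfr₁ : frontier T₁ = A₁ ∪ S) (hfr₂ : frontier T₂ = A₂ ∪ S)
    (x : ℝ × ℝ) (hx : x ∈ T₁)
    (γ : ℝ → ℝ × ℝ) (hγ : ContinuousOn γ (Set.Icc 0 1))
    (hγinj : Set.InjOn γ (Set.Icc 0 1)) (hγ0 : γ 0 = x)
    (hγint : ∀ t ∈ Set.Ico (0 : ℝ) 1, γ t ∈ JordanInterior P)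
    (hγ1 : γ 1 ∈ A₂) :
    ∃ t ∈ Set.Icc (0 : ℝ) 1, γ t ∈ S := by
  by_contra hcon
  push_neg at hcon
  -- T₂ is inside the Jordan interior and off S
  have hT₂sub : T₂ ⊆ JordanInterior P \ S := hTunion ▸ Set.subset_union_right
  have hT₁sub : T₁ ⊆ JordanInterior P \ S := hTunion ▸ Set.subset_union_left
  -- A₂ is disjoint from S
  have hA₂S : ∀ y ∈ A₂, y ∉ S := by
    intro y hy hyS
    have hyP : y ∈ P \ {p, q} := hAunion ▸ Set.mem_union_right _ hy
    have : y ∈ ({p, q} : Set (ℝ × ℝ)) := hSP ▸ ⟨hyS, hyP.1⟩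
    exact hyP.2 this
  -- closure of a set is contained in the set union its frontier
  have hclosure : ∀ (s : Set (ℝ × ℝ)), closure s ⊆ s ∪ frontier s := by
    intro s y hy
    by_cases h : y ∈ s
    · exact Or.inl h
    · exact Or.inr ⟨hy, fun h' => h (interior_subset h')⟩
  -- closure T₁ doesn't meet T₂
  have hclT₁T₂ : closure T₁ ∩ T₂ = ∅ := by
    ext y
    simp only [Set.mem_inter_iff, Set.mem_empty_iff_false, iff_false, not_and]
    intro hy hy2
    rcases hclosure T₁ hy with h | h
    · exact hTdisj.ne_of_mem h hy2 rfl
    · rw [hfr₁] at h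
      rcases h with h | h
      · exact (hT₂sub hy2).1.1 ((hAunion ▸ Set.mem_union_left _ h : y ∈ P \ {p,q}).1)
      · exact (hT₂sub hy2).2 h
  have hclT₂T₁ : closure T₂ ∩ T₁ = ∅ := by
    ext y
    simp only [Set.mem_inter_iff, Set.mem_empty_iff_false, iff_false, not_and]
    intro hy hy1
    rcases hclosure T₂ hy with h | h
    · exact hTdisj.ne_of_mem hy1 h rfl
    · rw [hfr₂] at h
      rcases h with h | h
      · exact (hT₁sub hy1).1.1 ((hAunion ▸ Set.mem_union_right _ h : y ∈ P \ {p,q}).1)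
      · exact (hT₁sub hy1).2 h
  -- the curve on [0,1) stays in T₁ ∪ T₂
  set c : Set (ℝ × ℝ) := γ '' Set.Ico 0 1 with hc
  have hcsub : c ⊆ T₁ ∪ T₂ := by
    rintro y ⟨t, ht, rfl⟩
    have h1 : γ t ∈ JordanInterior P := hγint t ht
    have h2 : γ t ∉ S := hcon t ⟨ht.1, ht.2.le⟩
    exact hTunion ▸ ⟨h1, h2⟩
  have hccon : IsPreconnected c :=
    (isPreconnected_Ico.image γ (hγ.mono (Set.Ico_subset_Icc_self)))
  have hxc : x ∈ c := ⟨0, ⟨le_refl 0, one_pos⟩, hγ0⟩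
  -- c stays in T₁
  have hcT₁ : c ⊆ T₁ := by
    by_contra h
    rcases Set.not_subset.mp h with ⟨y, hyc, hyT₁⟩
    have hyT₂ : y ∈ T₂ := (hcsub hyc).resolve_left hyT₁
    have := isPreconnected_closed_iff.mp hccon (closure T₁) (closure T₂)
      isClosed_closure isClosed_closure
      (fun z hz => (hcsub hz).imp (fun h => subset_closure h) (fun h => subset_closure h))
      ⟨x, hxc, subset_closure hx⟩ ⟨y, hyc, subset_closure hyT₂⟩
    rcases this with ⟨z, hzc, hz1, hz2⟩
    rcases hcsub hzc with hz | hz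
    · exact Set.eq_empty_iff_forall_notMem.mp hclT₂T₁ z ⟨hz2, hz⟩
    · exact Set.eq_empty_iff_forall_notMem.mp hclT₁T₂ z ⟨hz1, hz⟩
  -- γ 1 is in the closure of c
  have h1cl : γ 1 ∈ closure c := by
    have hcw : ContinuousWithinAt γ (Set.Ico 0 1) 1 :=
      (hγ.continuousWithinAt (Set.right_mem_Icc.mpr zero_le_one)).mono
        Set.Ico_subset_Icc_self
    have h1m : (1 : ℝ) ∈ closure (Set.Ico (0:ℝ) 1) := by
      rw [closure_Ico (zero_ne_one)]
      exact Set.right_mem_Icc.mpr zero_le_one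
    exact hcw.mem_closure_image h1m
  have h1T₁ : γ 1 ∈ closure T₁ := closure_mono hcT₁ h1cl
  rcases hclosure T₁ h1T₁ with h | h
  · exact (hT₁sub h).1.1 ((hAunion ▸ Set.mem_union_right _ hγ1 : γ 1 ∈ P \ {p,q}).1)
  · rw [hfr₁] at h
    rcases h with h | h
    · exact hAdisj.ne_of_mem h hγ1 rfl
    · exact hA₂S _ hγ1 h
end

section
/- Let γ be a simple curve starting at a point x in the interior of a simple closed curve P and ending in the exterior of P, meeting P transversally. Let S be a simple arc with endpoints on P and interior in int P, splitting int P into T₁ and T₂ with boundary P-arcs A₁ and A₂. If γ is disjoint from S and x ∈ T₁, then the first intersection point of γ with P lies on the closed arc A₁. -/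
/-!
The curve `γ` on `[0, t₀)` avoids `P` (hence `A₁`) and `S`, so it never meets
`frontier T₁ = A₁ ∪ S`; being connected and starting in `T₁`, it stays in `T₁`. Its limit
`γ t₀` is then in `closure T₁` but not in `T₁ ⊆ int P`, i.e. on `frontier T₁`, and since
`γ` avoids `S` it lies on `A₁`.
-/

open Set

theorem IsPreconnected.subset_of_disjoint_frontier {X : Type*} [TopologicalSpace X]
    {s t : Set X} (hs : IsPreconnected s) (hst : (s ∩ t).Nonempty)
    (hfr : Disjoint s (frontier t)) : s ⊆ t := by
  have hcover : s ⊆ interior t ∪ (closure t)ᶜ := fun y hy => by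
    by_cases hyt : y ∈ closure t
    · exact .inl (by_contra fun hyi => hfr.ne_of_mem hy ⟨hyt, hyi⟩ rfl)
    · exact .inr hyt
  have hmeet : (s ∩ interior t).Nonempty := by
    obtain ⟨y, hys, hyt⟩ := hst
    exact ⟨y, hys, (hcover hys).resolve_right (not_not.2 (subset_closure hyt))⟩
  have hdisj : Disjoint (interior t) (closure t)ᶜ :=
    disjoint_compl_right.mono_left (interior_subset.trans subset_closure)
  exact (hs.subset_left_of_subset_union isOpen_interior isClosed_closure.isOpen_compl hdisj
    hcover hmeet).trans interior_subset

theorem mem_frontier_of_first_exit {X : Type*} [TopologicalSpace X] {γ : ℝ → X}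
    {t : Set X} {a b : ℝ} (hγ : ContinuousOn γ (Icc a b)) (hab : a < b) (ha : γ a ∈ t)
    (hb : γ b ∉ t) (hfirst : ∀ s ∈ Ico a b, γ s ∉ frontier t) : γ b ∈ frontier t := by
  have hpath : γ '' Ico a b ⊆ t :=
    (isPreconnected_Ico.image γ (hγ.mono Ico_subset_Icc_self)).subset_of_disjoint_frontier
      ⟨γ a, mem_image_of_mem γ (left_mem_Ico.2 hab), ha⟩
      (disjoint_left.2 fun _ ⟨s, hs, hy⟩ => hy ▸ hfirst s hs)
  have hlim : γ b ∈ closure (γ '' Ico a b) :=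
    ((hγ b (right_mem_Icc.2 hab.le)).mono Ico_subset_Icc_self).mem_closure_image
      (by rw [closure_Ico hab.ne]; exact right_mem_Icc.2 hab.le)
  exact ⟨closure_mono hpath hlim, fun hint => hb (interior_subset hint)⟩

theorem first_crossing_on_A1_general (P S : Set (ℝ × ℝ)) (p q : ℝ × ℝ)
    (A₁ A₂ T₁ T₂ : Set (ℝ × ℝ))
    (hAunion : P \ {p, q} = A₁ ∪ A₂)
    (hTunion : JordanInterior P \ S = T₁ ∪ T₂)
    (hfr₁ : frontier T₁ = A₁ ∪ S)
    (x : ℝ × ℝ) (hx : x ∈ T₁)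
    (γ : ℝ → ℝ × ℝ) (hγ : ContinuousOn γ (Set.Icc 0 1))
    (hγ0 : γ 0 = x)
    (hγS : ∀ t ∈ Set.Icc (0 : ℝ) 1, γ t ∉ S)
    (t₀ : ℝ) (ht₀ : t₀ ∈ Set.Icc (0 : ℝ) 1) (ht₀P : γ t₀ ∈ P)
    (ht₀first : ∀ s ∈ Set.Ico (0 : ℝ) t₀, γ s ∉ P) :
    γ t₀ ∈ closure A₁ := by
  have hT₁P : ∀ y ∈ T₁, y ∉ P := fun y hy =>
    ((hTunion.symm ▸ mem_union_left T₂ hy : y ∈ JordanInterior P \ S).1).1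
  have hA₁P : A₁ ⊆ P := fun y hy => (hAunion.symm ▸ mem_union_left A₂ hy : y ∈ P \ {p, q}).1
  have ht₀pos : 0 < t₀ :=
    ht₀.1.lt_of_ne (by rintro rfl; exact hT₁P x hx (hγ0 ▸ ht₀P))
  have hfirst : ∀ s ∈ Ico 0 t₀, γ s ∉ frontier T₁ := fun s hs => by
    rw [hfr₁]
    exact fun hA => hA.elim (fun h => ht₀first s hs (hA₁P h))
      (hγS s ⟨hs.1, hs.2.le.trans ht₀.2⟩)
  have hexit : γ t₀ ∈ A₁ ∪ S :=
    hfr₁ ▸ mem_frontier_of_first_exit (hγ.mono (Icc_subset_Icc_right ht₀.2)) ht₀pos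
      (hγ0 ▸ hx) (fun h => hT₁P _ h ht₀P) hfirst
  exact subset_closure (hexit.resolve_right (hγS t₀ ht₀))

/-- With `S` a simple arc splitting the interior of a simple closed curve `P` into
components `T₁` (bounded by `A₁ ∪ S`) and `T₂` (bounded by `A₂ ∪ S`): a simple curve
starting at `x ∈ T₁`, ending in the exterior of `P` and disjoint from `S`, first
meets `P` at a point of the closed arc `closure A₁`. -/
theorem first_crossing_on_A1 (P S : Set (ℝ × ℝ)) (p q : ℝ × ℝ)
    (hP : IsSimpleClosedCurve P) (hS : IsArc S p q) (hpq : p ≠ q)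
    (hpP : p ∈ P) (hqP : q ∈ P) (hSP : S ∩ P = {p, q})
    (hSint : S \ {p, q} ⊆ JordanInterior P)
    (A₁ A₂ T₁ T₂ : Set (ℝ × ℝ))
    (hA : A₁ ≠ A₂) (hA₁ : IsConnected A₁) (hA₂ : IsConnected A₂)
    (hAdisj : Disjoint A₁ A₂) (hAunion : P \ {p, q} = A₁ ∪ A₂)
    (hT : T₁ ≠ T₂) (hT₁ : IsConnected T₁) (hT₂ : IsConnected T₂)
    (hTdisj : Disjoint T₁ T₂) (hTunion : JordanInterior P \ S = T₁ ∪ T₂)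
    (hfr₁ : frontier T₁ = A₁ ∪ S) (hfr₂ : frontier T₂ = A₂ ∪ S)
    (x : ℝ × ℝ) (hx : x ∈ T₁)
    (γ : ℝ → ℝ × ℝ) (hγ : ContinuousOn γ (Set.Icc 0 1))
    (hγinj : Set.InjOn γ (Set.Icc 0 1)) (hγ0 : γ 0 = x)
    (hγ1 : γ 1 ∈ JordanExterior P)
    (hγS : ∀ t ∈ Set.Icc (0 : ℝ) 1, γ t ∉ S)
    (t₀ : ℝ) (ht₀ : t₀ ∈ Set.Icc (0 : ℝ) 1) (ht₀P : γ t₀ ∈ P)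
    (ht₀first : ∀ s ∈ Set.Ico (0 : ℝ) t₀, γ s ∉ P) :
    γ t₀ ∈ closure A₁ :=
  first_crossing_on_A1_general P S p q A₁ A₂ T₁ T₂ hAunion hTunion hfr₁ x hx γ hγ hγ0 hγS t₀ ht₀
    ht₀P ht₀first
end
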